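/- Let C be a very thin prefix code (there exists w ∈ C* that is not a factor of any element of C) coding a shift X, and let 𝒜 = (Q, i, i) be the minimal automaton of C*. Then for such a word w, the set I(w) = {q ∈ Q : p·w = q for some p ∈ Q} is finite; in fact I(w) is contained in {i·s : s is a suffix of w}. -/

import Mathlib

/-!
Suppose `u w v ∈ C*` and factor it into codewords. Since `w` is a factor of no codeword, no
codeword covers the whole occurrence of `w`, so some cut of the factorization falls inside it:
`u w = x s` with `x ∈ C*` and `s` a suffix of `w`. As `C` is a prefix code, `C*` is right unitary
(`x ∈ C*` and `x y ∈ C*` give `y ∈ C*`), hence `(u w)⁻¹C* = (x s)⁻¹C* = s⁻¹C*`. A word has only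
finitely many suffixes.
-/

variable {A : Type*}

/-- `C*`: `w` is a concatenation of words of `C`. -/
def InStar (C : Set (List A)) (w : List A) : Prop :=
  ∃ l : List (List A), (∀ u ∈ l, u ∈ C) ∧ l.flatten = w

/-- `C` is a prefix code: no element of `C` is a proper prefix of another. -/
def IsPrefixCode (C : Set (List A)) : Prop :=
  ∀ c ∈ C, ∀ c' ∈ C, c <+: c' → c = c'

/-- The left quotient `u⁻¹(C*)`, i.e. the state `i·u` of the minimal automaton
of `C*` reached from the initial state by reading `u`. -/
def leftQuot (C : Set (List A)) (u : List A) : Set (List A) :=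
  {v | InStar C (u ++ v)}

variable {C : Set (List A)}

theorem InStar.nil : InStar C [] :=
  ⟨[], by simp, rfl⟩

theorem InStar.of_mem {c : List A} (hc : c ∈ C) : InStar C c :=
  ⟨[c], by simpa using hc, by simp⟩

theorem InStar.append {x y : List A} (hx : InStar C x) (hy : InStar C y) :
    InStar C (x ++ y) := by
  obtain ⟨l₁, h₁, rfl⟩ := hx
  obtain ⟨l₂, h₂, rfl⟩ := hy
  refine ⟨l₁ ++ l₂, fun u hu => ?_, by simp⟩
  rcases List.mem_append.1 hu with hu | hu
  exacts [h₁ u hu, h₂ u hu]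

theorem IsPrefixCode.inStar_right_of_mem_append (hpc : IsPrefixCode C) {c y : List A}
    (hc : c ∈ C) (hcy : InStar C (c ++ y)) : InStar C y := by
  obtain ⟨l, hl, he⟩ := hcy
  cases l with
  | nil =>
    obtain ⟨-, rfl⟩ := List.append_eq_nil_iff.1 he.symm
    exact InStar.nil
  | cons c₁ t =>
    have hc₁ : c₁ ∈ C := hl c₁ List.mem_cons_self
    have h₁ : c₁ <+: c ++ y := ⟨t.flatten, by simpa using he⟩
    have hcc₁ : c₁ = c := by
      rcases List.prefix_or_prefix_of_prefix h₁ (List.prefix_append c y) with h | h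
      · exact hpc c₁ hc₁ c hc h
      · exact (hpc c hc c₁ hc₁ h).symm
    subst hcc₁
    exact ⟨t, fun u hu => hl u (List.mem_cons_of_mem _ hu), by simpa using he⟩

theorem IsPrefixCode.inStar_right_of_inStar_append (hpc : IsPrefixCode C) {x y : List A}
    (hx : InStar C x) (hxy : InStar C (x ++ y)) : InStar C y := by
  obtain ⟨l, hl, rfl⟩ := hx
  induction l with
  | nil => simpa using hxy
  | cons c t ih =>
    refine ih (fun u hu => hl u (List.mem_cons_of_mem _ hu)) ?_
    exact hpc.inStar_right_of_mem_append (hl c List.mem_cons_self)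
      (by simpa [List.append_assoc] using hxy)

theorem IsPrefixCode.leftQuot_append_of_inStar (hpc : IsPrefixCode C) {x s : List A}
    (hx : InStar C x) : leftQuot C (x ++ s) = leftQuot C s := by
  ext v
  simp only [leftQuot, Set.mem_ofPred_eq, List.append_assoc]
  exact ⟨hpc.inStar_right_of_inStar_append hx, hx.append⟩

theorem exists_inStar_append_suffix_of_eq_flatten {w : List A}
    (hthin : ∀ c ∈ C, ¬ w <:+: c) (l : List (List A)) (hl : ∀ c ∈ l, c ∈ C)
    (u v : List A) (he : u ++ (w ++ v) = l.flatten) :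
    ∃ x s, InStar C x ∧ s <:+ w ∧ u ++ w = x ++ s := by
  induction l generalizing u with
  | nil =>
    obtain ⟨rfl, rfl, -⟩ : u = [] ∧ w = [] ∧ v = [] := by simpa using he
    exact ⟨[], [], InStar.nil, List.suffix_refl _, rfl⟩
  | cons c t ih =>
    have hc : c ∈ C := hl c List.mem_cons_self
    rw [List.flatten_cons, List.append_eq_append_iff] at he
    rcases he with ⟨a, rfl, ha⟩ | ⟨u', rfl, hu'⟩
    · rcases List.append_eq_append_iff.1 ha with ⟨b, rfl, -⟩ | ⟨s, rfl, -⟩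
      · exact absurd ⟨u, b, List.append_assoc _ _ _⟩ (hthin _ hc)
      · exact ⟨u ++ a, s, InStar.of_mem hc, List.suffix_append a s, by simp⟩
    · obtain ⟨x, s, hx, hs, hxs⟩ := ih (fun d hd => hl d (List.mem_cons_of_mem _ hd)) u' hu'.symm
      exact ⟨c ++ x, s, (InStar.of_mem hc).append hx, hs, by simp [hxs]⟩

theorem exists_inStar_append_suffix {w u v : List A} (hthin : ∀ c ∈ C, ¬ w <:+: c)
    (h : InStar C (u ++ w ++ v)) : ∃ x s, InStar C x ∧ s <:+ w ∧ u ++ w = x ++ s := by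
  obtain ⟨l, hl, he⟩ := h
  exact exists_inStar_append_suffix_of_eq_flatten hthin l hl u v (by simp [he])

theorem stmt17_general (C : Set (List A)) (hpc : IsPrefixCode C)
    (w : List A)
    (hthin : ∀ c ∈ C, ¬ w <:+: c) :
    {S : Set (List A) | ∃ u : List A, S = leftQuot C (u ++ w) ∧ S.Nonempty} ⊆
      {S : Set (List A) | ∃ s : List A, s <:+ w ∧ S = leftQuot C s} ∧
    Set.Finite
      {S : Set (List A) | ∃ u : List A, S = leftQuot C (u ++ w) ∧ S.Nonempty} := by
  have hsub : {S : Set (List A) | ∃ u : List A, S = leftQuot C (u ++ w) ∧ S.Nonempty} ⊆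
      {S : Set (List A) | ∃ s : List A, s <:+ w ∧ S = leftQuot C s} := by
    rintro S ⟨u, rfl, v, hv⟩
    obtain ⟨x, s, hx, hs, hxs⟩ := exists_inStar_append_suffix hthin (v := v) hv
    exact ⟨s, hs, by rw [hxs, hpc.leftQuot_append_of_inStar hx]⟩
  refine ⟨hsub, (w.tails.finite_toSet.image (leftQuot C)).subset fun S hS => ?_⟩
  obtain ⟨s, hs, rfl⟩ := hsub hS
  exact ⟨s, (List.mem_tails _ _).2 hs, rfl⟩

/-- if `C` is a very thin prefix code, witnessed by `w ∈ C*`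
which is not a factor of any element of `C`, then in the minimal automaton of
`C*` the set `I(w)` of states reachable by reading `w` is contained in
`{i·s : s suffix of w}`, and in particular is finite. -/
theorem stmt17 [Fintype A] (C : Set (List A)) (hpc : IsPrefixCode C)
    (hne : ∀ c ∈ C, c ≠ []) (w : List A) (hw : InStar C w)
    (hthin : ∀ c ∈ C, ¬ w <:+: c) :
    {S : Set (List A) | ∃ u : List A, S = leftQuot C (u ++ w) ∧ S.Nonempty} ⊆
      {S : Set (List A) | ∃ s : List A, s <:+ w ∧ S = leftQuot C s} ∧
    Set.Finite
      {S : Set (List A) | ∃ u : List A, S = leftQuot C (u ++ w) ∧ S.Nonempty} :=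
  stmt17_general C hpc w hthin
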